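/- arXiv:2110.00968 — 2 statements merged into one kernel-verified Lean document; each statement's English description precedes it below -/
import Mathlib

section
/- Baranyai's theorem for r = 2: the edge set of the complete graph K_N on N vertices (N even) can be partitioned into N−1 perfect matchings, i.e., N−1 sets of N/2 pairwise disjoint edges each covering all vertices; for N odd, the edges can be partitioned into N sets of pairwise disjoint edges. -/
open Finset SimpleGraph

private lemma mem_complete_edgeSet' {N : ℕ} (e : Sym2 (Fin N)) :
    e ∈ (completeGraph (Fin N)).edgeSet ↔ ¬ e.IsDiag := by
  induction e
  simp [completeGraph]

private lemma card_mem_filter' {N : ℕ} (e : Sym2 (Fin N)) (hd : ¬ e.IsDiag) :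
    (univ.filter (fun v : Fin N => v ∈ e)).card = 2 := by
  induction e with
  | _ a b =>
    have hab : a ≠ b := by
      intro h; exact hd (by simp [h])
    have h2 : univ.filter (fun v : Fin N => v ∈ s(a,b)) = {a, b} := by
      ext v; simp [Sym2.mem_iff]
    rw [h2, card_pair hab]

private lemma matching_card' {N : ℕ} (S : Finset (Sym2 (Fin N)))
    (hvalid : ∀ e ∈ S, ¬ e.IsDiag)
    (hcov : ∀ v : Fin N, ∃! e, e ∈ S ∧ v ∈ e) : 2 * S.card = N := by
  classical
  let f : Fin N → Sym2 (Fin N) := fun v => (hcov v).exists.choose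
  have hf : ∀ v, f v ∈ S ∧ v ∈ f v := fun v => (hcov v).exists.choose_spec
  have key := Finset.card_eq_sum_card_fiberwise (f := f) (s := univ) (t := S)
    (fun v _ => (hf v).1)
  have hfib : ∀ e ∈ S, (univ.filter (fun v => f v = e)).card = 2 := by
    intro e he
    have heq : univ.filter (fun v => f v = e) = univ.filter (fun v => v ∈ e) := by
      ext v
      simp only [mem_filter, mem_univ, true_and]
      constructor
      · rintro rfl; exact (hf v).2
      · intro hv
        exact (hcov v).unique (hf v) ⟨he, hv⟩
    rw [heq]
    exact card_mem_filter' e (hvalid e he)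
  rw [Finset.sum_congr rfl hfib, Finset.sum_const, smul_eq_mul] at key
  simp only [Finset.card_univ, Fintype.card_fin] at key
  omega

/-- Baranyai's theorem for `r = 2`: the edge set of the complete graph
`K_N` on `N` vertices can, for `N` even, be partitioned into `N − 1` perfect matchings
(each consisting of `N/2` pairwise disjoint edges covering every vertex exactly once);
for `N` odd, it can be partitioned into `N` sets of pairwise disjoint edges. -/
theorem baranyai_r_two (N : ℕ) (hN : 2 ≤ N) :
    (Even N → ∃ F : Fin (N - 1) → Finset (Sym2 (Fin N)),
      (∀ e ∈ (completeGraph (Fin N)).edgeSet, ∃! i, e ∈ F i) ∧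
      (∀ i, ∀ e ∈ F i, e ∈ (completeGraph (Fin N)).edgeSet) ∧
      (∀ i, (F i).card = N / 2) ∧
      (∀ i, ∀ v : Fin N, ∃! e, e ∈ F i ∧ v ∈ e)) ∧
    (Odd N → ∃ F : Fin N → Finset (Sym2 (Fin N)),
      (∀ e ∈ (completeGraph (Fin N)).edgeSet, ∃! i, e ∈ F i) ∧
      (∀ i, ∀ e ∈ F i, e ∈ (completeGraph (Fin N)).edgeSet) ∧
      (∀ i, ∀ e ∈ F i, ∀ e' ∈ F i, e ≠ e' → ∀ v : Fin N, ¬(v ∈ e ∧ v ∈ e'))) := by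
  constructor
  · -- Even case
    intro hEven
    haveI : NeZero (N - 1) := ⟨by omega⟩
    have hmodd : Odd (N - 1) := Nat.Even.sub_odd (by omega) hEven odd_one
    have hcop : Nat.Coprime 2 (N - 1) := Nat.coprime_two_left.mpr hmodd
    set u : (ZMod (N - 1))ˣ := ZMod.unitOfCoprime 2 hcop with hudef
    have hu : (u : ZMod (N - 1)) = 2 := by
      rw [hudef, ZMod.coe_unitOfCoprime]
      norm_cast
    set f : Fin N → Fin N → ZMod (N - 1) := fun a b =>
      if a.val = N - 1 then 2 * (b.val : ZMod (N - 1))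
      else if b.val = N - 1 then 2 * (a.val : ZMod (N - 1))
      else (a.val : ZMod (N - 1)) + b.val with hfdef
    have hfsymm : ∀ a b, f a b = f b a := by
      intro a b
      simp only [hfdef]
      split_ifs with h1 h2 h3
      · rw [h1, h2]
      · rfl
      · rfl
      · exact add_comm _ _
    set c : Sym2 (Fin N) → ZMod (N - 1) := Sym2.lift ⟨f, hfsymm⟩ with hc
    set L : ZMod (N - 1) → Fin N := fun x => ⟨x.val, by have := ZMod.val_lt x; omega⟩
      with hLdef
    have hL : ∀ x, ((L x).val : ZMod (N - 1)) = x := fun x => ZMod.natCast_rightInverse x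
    have hLlt : ∀ x, (L x).val < N - 1 := fun x => ZMod.val_lt x
    set F : Fin (N - 1) → Finset (Sym2 (Fin N)) :=
      fun i => univ.filter (fun e => ¬ e.IsDiag ∧ c e = (i.val : ZMod (N - 1))) with hF
    have hvalid : ∀ i, ∀ e ∈ F i, ¬ e.IsDiag := by
      intro i e he
      simp only [hF, mem_filter, mem_univ, true_and] at he
      exact he.1
    have hfinf : ∀ a b : Fin N, a.val = N - 1 → f a b = 2 * (b.val : ZMod (N - 1)) := by
      intro a b h; simp only [hfdef]; rw [if_pos h]
    have hffin : ∀ a b : Fin N, a.val ≠ N - 1 → b.val = N - 1 →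
        f a b = 2 * (a.val : ZMod (N - 1)) := by
      intro a b h1 h2; simp only [hfdef]; rw [if_neg h1, if_pos h2]
    have hfboth : ∀ a b : Fin N, a.val ≠ N - 1 → b.val ≠ N - 1 →
        f a b = (a.val : ZMod (N - 1)) + b.val := by
      intro a b h1 h2; simp only [hfdef]; rw [if_neg h1, if_neg h2]
    have hcancel : ∀ x y : ZMod (N - 1), 2 * x = 2 * y → x = y := by
      intro x y h
      have h2 : ((u⁻¹ : (ZMod (N - 1))ˣ) : ZMod (N - 1)) * (2 * x)
          = ((u⁻¹ : (ZMod (N - 1))ˣ) : ZMod (N - 1)) * (2 * y) := by rw [h]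
      rwa [← hu, ← mul_assoc, ← mul_assoc, Units.inv_mul, one_mul, one_mul] at h2
    have hvinj : ∀ a b : Fin N, a.val < N - 1 → b.val < N - 1 →
        (a.val : ZMod (N - 1)) = (b.val : ZMod (N - 1)) → a = b := by
      intro a b ha hb h
      have := congrArg ZMod.val h
      rw [ZMod.val_cast_of_lt ha, ZMod.val_cast_of_lt hb] at this
      exact Fin.ext this
    have hcov : ∀ i, ∀ v : Fin N, ∃! e, e ∈ F i ∧ v ∈ e := by
      intro i v
      set t : ZMod (N - 1) := (i.val : ZMod (N - 1)) with ht
      have hmemF : ∀ e : Sym2 (Fin N), e ∈ F i ↔ ¬ e.IsDiag ∧ c e = t := by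
        intro e; simp [hF, ht]
      have main : ∃ p : Fin N, (v ≠ p ∧ f v p = t) ∧
          ∀ w : Fin N, v ≠ w → f v w = t → w = p := by
        by_cases hv : v.val = N - 1
        · -- v is the special vertex
          have htwo : 2 * (((u⁻¹ : (ZMod (N - 1))ˣ) : ZMod (N - 1)) * t) = t := by
            rw [← hu, ← mul_assoc, Units.mul_inv, one_mul]
          refine ⟨L ((u⁻¹ : (ZMod (N - 1))ˣ) * t), ⟨?_, ?_⟩, ?_⟩
          · intro h
            have hlt := hLlt (((u⁻¹ : (ZMod (N - 1))ˣ) : ZMod (N - 1)) * t)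
            rw [h] at hv; omega
          · rw [hfinf _ _ hv, hL, htwo]
          · intro w hvw hfw
            have hwne : w.val ≠ N - 1 := by
              intro h; exact hvw (Fin.ext (hv.trans h.symm))
            have hw2 : 2 * (w.val : ZMod (N - 1)) = t := by
              rw [← hfinf _ _ hv]; exact hfw
            refine hvinj _ _ (by omega) (hLlt _) ?_
            rw [hL]
            exact hcancel _ _ (hw2.trans htwo.symm)
        · by_cases h2v : 2 * (v.val : ZMod (N - 1)) = t
          · -- v is matched with the special vertex
            refine ⟨⟨N - 1, by omega⟩, ⟨?_, ?_⟩, ?_⟩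
            · intro h
              apply hv
              rw [h]
            · rw [hffin _ _ hv rfl]; exact h2v
            · intro w hvw hfw
              by_cases hwv : w.val = N - 1
              · exact Fin.ext hwv
              · exfalso
                rw [hfboth _ _ hv hwv] at hfw
                have : (w.val : ZMod (N - 1)) = (v.val : ZMod (N - 1)) := by
                  have h2 : (v.val : ZMod (N - 1)) + w.val
                      = (v.val : ZMod (N - 1)) + v.val := by
                    rw [hfw, ← h2v]; ring
                  exact add_left_cancel h2
                exact hvw (hvinj _ _ (by omega) (by omega) this.symm)
          · -- generic case
            refine ⟨L (t - (v.val : ZMod (N - 1))), ⟨?_, ?_⟩, ?_⟩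
            · intro h
              apply h2v
              have h1 : (v.val : ZMod (N - 1)) = t - (v.val : ZMod (N - 1)) := by
                conv_lhs => rw [h]
                rw [hL]
              rw [two_mul]
              nth_rewrite 1 [h1]
              ring
            · have hpne : (L (t - (v.val : ZMod (N - 1)))).val ≠ N - 1 := by
                have := hLlt (t - (v.val : ZMod (N - 1))); omega
              rw [hfboth _ _ hv hpne, hL]; ring
            · intro w hvw hfw
              by_cases hwv : w.val = N - 1
              · exfalso
                rw [hffin _ _ hv hwv] at hfw
                exact h2v hfw
              · rw [hfboth _ _ hv hwv] at hfw
                refine hvinj _ _ (by omega) (hLlt _) ?_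
                rw [hL]
                rw [← hfw]; ring
      obtain ⟨p, ⟨hvp, hfp⟩, huniq⟩ := main
      refine ⟨s(v, p), ⟨(hmemF _).2 ⟨?_, ?_⟩, Sym2.mem_mk_left _ _⟩, ?_⟩
      · rw [Sym2.mk_isDiag_iff]; exact hvp
      · rw [hc, Sym2.lift_mk]; exact hfp
      · rintro e' ⟨he', hv'⟩
        rw [hmemF] at he'
        obtain ⟨hd', hce'⟩ := he'
        have hspec := Sym2.other_spec hv'
        set w := Sym2.Mem.other hv' with hw
        have hvw : v ≠ w := by
          intro h
          apply hd'
          rw [← hspec, Sym2.mk_isDiag_iff]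
          exact h
        have hcw : f v w = t := by
          rw [← hspec, hc, Sym2.lift_mk] at hce'
          exact hce'
        rw [← hspec, huniq w hvw hcw]
    have hcard : ∀ i, (F i).card = N / 2 := by
      intro i
      have := matching_card' (F i) (hvalid i) (hcov i)
      omega
    refine ⟨F, ?_, ?_, hcard, hcov⟩
    · intro e he
      have hd := (mem_complete_edgeSet' e).1 he
      refine ⟨⟨(c e).val, ZMod.val_lt _⟩, by
        simp [hF, hd, ZMod.natCast_rightInverse (c e)], ?_⟩
      intro j hj
      simp only [hF, mem_filter, mem_univ, true_and] at hj
      apply Fin.ext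
      have := congrArg ZMod.val hj.2
      rw [ZMod.val_cast_of_lt j.isLt] at this
      exact this.symm
    · intro i e he
      exact (mem_complete_edgeSet' e).2 (hvalid i e he)
  · -- Odd case
    intro hOdd
    haveI : NeZero N := ⟨by omega⟩
    set c : Sym2 (Fin N) → ZMod N :=
      Sym2.lift ⟨fun a b => (a.val : ZMod N) + b.val, fun a b => add_comm _ _⟩ with hc
    refine ⟨fun i => univ.filter (fun e => ¬ e.IsDiag ∧ c e = (i.val : ZMod N)), ?_, ?_, ?_⟩
    · intro e he
      have hd := (mem_complete_edgeSet' e).1 he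
      refine ⟨⟨(c e).val, ZMod.val_lt _⟩, by simp [hd, ZMod.natCast_rightInverse (c e)], ?_⟩
      intro j hj
      simp only [mem_filter, mem_univ, true_and] at hj
      apply Fin.ext
      have := congrArg ZMod.val hj.2
      rw [ZMod.val_cast_of_lt j.isLt] at this
      exact this.symm
    · intro i e he
      simp only [mem_filter, mem_univ, true_and] at he
      exact (mem_complete_edgeSet' e).2 he.1
    · intro i e he e' he' hne v ⟨hv, hv'⟩
      simp only [mem_filter, mem_univ, true_and] at he he'
      have h1 := Sym2.other_spec hv
      have h2 := Sym2.other_spec hv'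
      set w := Sym2.Mem.other hv
      set w' := Sym2.Mem.other hv'
      have hce : c e = (v.val : ZMod N) + w.val := by rw [← h1, hc, Sym2.lift_mk]
      have hce' : c e' = (v.val : ZMod N) + w'.val := by rw [← h2, hc, Sym2.lift_mk]
      have : (w.val : ZMod N) = (w'.val : ZMod N) := by
        have := hce ▸ hce' ▸ (he.2.trans he'.2.symm)
        exact add_left_cancel this
      have hval := congrArg ZMod.val this
      rw [ZMod.val_cast_of_lt w.isLt, ZMod.val_cast_of_lt w'.isLt] at hval
      exact hne (h1 ▸ h2 ▸ (by rw [Fin.ext hval]))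
end

section
/- The set of Pauli strings appearing in the binary encoding of the single-oscillator position operator x (for d = 2^m levels) can be partitioned into commuting collections measurable in d − 1 = 2^m − 1 independent measurement bases: for each k ∈ {0,...,m−1}, the terms with rightmost X/Y block of length k+1 require 2^k bases, and ∑_{k=0}^{m−1} 2^k = 2^m − 1. -/
open Matrix Finset

/-- The four single-qubit Pauli matrices: I, X, Y, Z. -/
noncomputable def pauli : Fin 4 → Matrix (Fin 2) (Fin 2) ℂ :=
  ![1, !![0, 1; 1, 0], !![0, -Complex.I; Complex.I, 0], !![1, 0; 0, -1]]

/-- An `m`-qubit Pauli string. -/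
noncomputable def pauliString {m : ℕ} (s : Fin m → Fin 4) :
    Matrix (Fin m → Fin 2) (Fin m → Fin 2) ℂ :=
  Matrix.of fun b b' => ∏ i, pauli (s i) (b i) (b' i)

/-- The integer encoded by a bit string (qubit `i` carries bit `i`, LSB at `i = 0`). -/
def bval {m : ℕ} (b : Fin m → Fin 2) : ℕ := ∑ i : Fin m, 2 ^ (i : ℕ) * (b i : ℕ)

/-- Matrix elements of the truncated position operator in the Fock basis. -/
noncomputable def xc (a b : ℕ) : ℂ :=
  if a = b + 1 then (Real.sqrt (b + 1) : ℂ)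
  else if b = a + 1 then (Real.sqrt (a + 1) : ℂ) else 0

/-- The binary-encoded position operator of a `d = 2^m` level oscillator on `m` qubits. -/
noncomputable def xEnc (m : ℕ) : Matrix (Fin m → Fin 2) (Fin m → Fin 2) ℂ :=
  Matrix.of fun b b' => xc (bval b) (bval b')

/-- A measurement basis `b : Fin m → Fin 4` (all entries in {X, Y, Z}, i.e. non-identity)
covers a Pauli string `s` if it agrees with `s` on every qubit where `s` is not the
identity; then `s` can be measured in basis `b`. -/
def Covers {m : ℕ} (b s : Fin m → Fin 4) : Prop :=
  ∀ i, s i ≠ 0 → b i = s i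

/-!
The trace `tr (P_s x)` is a sum of entries `P_s(b, b') x(b', b)`, and `x(b', b) ≠ 0` only when
the numbers encoded by `b` and `b'` differ by one. Adding one to a binary number flips exactly
its bits `0, …, k` for some `k`, while `P_s(b, b') ≠ 0` forces the X/Y letters of `s` to sit
exactly where `b` and `b'` differ; so the X/Y letters of `s` occupy exactly the qubits `0, …, k`.
Since `x` is real symmetric and `P_sᵀ = (-1)^{#Y} P_s`, the trace also vanishes unless `s` has
an even number of Y's. Such an `s` is covered by the basis carrying its letters on `0, …, k` and
`Z` above `k`. These bases are determined by `k` and by their Y-positions below `k` (the parity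
fixes the letter at `k`), so there are `∑_{k<m} 2^k = 2^m - 1` of them.
-/

lemma pauli_apply_swap (p : Fin 4) (x y : Fin 2) :
    pauli p y x = (if p = 2 then -1 else 1) * pauli p x y := by
  fin_cases p <;> fin_cases x <;> fin_cases y <;> simp [pauli]

lemma pauli_apply_ne_zero_iff {p : Fin 4} {x y : Fin 2} (h : pauli p x y ≠ 0) :
    (p = 1 ∨ p = 2) ↔ x ≠ y := by
  fin_cases p <;> fin_cases x <;> fin_cases y <;> simp_all [pauli]

lemma pauliString_apply {m : ℕ} (s : Fin m → Fin 4) (b b' : Fin m → Fin 2) :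
    pauliString s b b' = ∏ i, pauli (s i) (b i) (b' i) := rfl

lemma pauliString_transpose {m : ℕ} (s : Fin m → Fin 4) :
    (pauliString s)ᵀ = (-1 : ℂ) ^ #{i | s i = 2} • pauliString s := by
  ext b b'
  rw [transpose_apply, Matrix.smul_apply, smul_eq_mul, pauliString_apply, pauliString_apply,
    prod_congr rfl fun i _ => pauli_apply_swap (s i) (b i) (b' i), prod_mul_distrib, prod_ite,
    prod_const, prod_const, one_pow, mul_one]

theorem trace_pauliString_mul_eq_zero_of_odd {m : ℕ} {s : Fin m → Fin 4}
    {A : Matrix (Fin m → Fin 2) (Fin m → Fin 2) ℂ} (hA : Aᵀ = A)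
    (hodd : Odd #{i | s i = 2}) : trace (pauliString s * A) = 0 := by
  have h : trace (pauliString s * A) = -trace (pauliString s * A) :=
    calc trace (pauliString s * A)
        = trace (Aᵀ * (pauliString s)ᵀ) := by rw [← transpose_mul, trace_transpose]
      _ = -trace (pauliString s * A) := by
        rw [hA, pauliString_transpose, hodd.neg_one_pow, mul_smul_comm, trace_smul,
          trace_mul_comm, neg_one_smul]
  exact CharZero.eq_neg_self_iff.mp h

lemma xc_comm (a b : ℕ) : xc a b = xc b a := by
  unfold xc; split_ifs <;> first | rfl | omega

lemma xc_ne_zero {a b : ℕ} (h : xc a b ≠ 0) : a = b + 1 ∨ b = a + 1 := by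
  unfold xc at h
  split_ifs at h <;> tauto

lemma xEnc_transpose (m : ℕ) : (xEnc m)ᵀ = xEnc m := by
  ext b b'
  exact xc_comm _ _

lemma bval_eq_finFunctionFinEquiv {m : ℕ} (b : Fin m → Fin 2) :
    bval b = finFunctionFinEquiv b := by
  simp only [bval, finFunctionFinEquiv_apply, mul_comm]

lemma bval_injective (m : ℕ) : Function.Injective (bval : (Fin m → Fin 2) → ℕ) := by
  intro b b' h
  rw [bval_eq_finFunctionFinEquiv, bval_eq_finFunctionFinEquiv, Fin.val_inj] at h
  exact finFunctionFinEquiv.injective h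

lemma bval_succ {m : ℕ} (b : Fin (m + 1) → Fin 2) :
    bval b = b 0 + 2 * bval (Fin.tail b) := by
  simp only [bval, Fin.sum_univ_succ, mul_sum, Fin.val_zero, pow_zero, one_mul, Fin.val_succ,
    pow_succ, Fin.tail, mul_assoc, mul_left_comm 2]

theorem exists_ne_iff_le_of_bval_eq_add_one {m : ℕ} {b b' : Fin m → Fin 2}
    (h : bval b' = bval b + 1) : ∃ k : Fin m, ∀ i, b i ≠ b' i ↔ i ≤ k := by
  induction m with
  | zero => simp [bval] at h
  | succ m ih =>
    rw [bval_succ, bval_succ] at h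
    have hb0 := (b 0).isLt
    have hb'0 := (b' 0).isLt
    by_cases hlow : (b 0 : ℕ) = 0
    · have htail : Fin.tail b = Fin.tail b' := bval_injective m (by omega)
      refine ⟨0, Fin.cases (by simp [Fin.ext_iff]; omega) fun j => ?_⟩
      simpa [not_le.mpr j.succ_pos, Fin.tail] using congrFun htail j
    · obtain ⟨k, hk⟩ := ih (b := Fin.tail b) (b' := Fin.tail b') (by omega)
      refine ⟨k.succ, Fin.cases (by simp [Fin.ext_iff]; omega) fun j => ?_⟩
      simpa [Fin.succ_le_succ_iff, Fin.tail] using hk j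

theorem exists_offDiag_iff_le_of_trace_ne_zero {m : ℕ} {s : Fin m → Fin 4}
    (h : trace (pauliString s * xEnc m) ≠ 0) :
    ∃ k : Fin m, ∀ i, (s i = 1 ∨ s i = 2) ↔ i ≤ k := by
  have h : ∑ b, ∑ b', pauliString s b b' * xc (bval b') (bval b) ≠ 0 := h
  obtain ⟨b, -, hb⟩ := exists_ne_zero_of_sum_ne_zero h
  obtain ⟨b', -, hbb'⟩ := exists_ne_zero_of_sum_ne_zero hb
  have hflip : ∀ i, (s i = 1 ∨ s i = 2) ↔ b i ≠ b' i := fun i =>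
    pauli_apply_ne_zero_iff (prod_ne_zero_iff.mp (left_ne_zero_of_mul hbb') i (mem_univ i))
  rcases xc_ne_zero (right_ne_zero_of_mul hbb') with hinc | hinc
  · obtain ⟨k, hk⟩ := exists_ne_iff_le_of_bval_eq_add_one hinc
    exact ⟨k, fun i => (hflip i).trans (hk i)⟩
  · obtain ⟨k, hk⟩ := exists_ne_iff_le_of_bval_eq_add_one hinc
    exact ⟨k, fun i => (hflip i).trans (ne_comm.trans (hk i))⟩

def ladderBasis {m : ℕ} (k : Fin m) (A : Finset (Fin m)) : Fin m → Fin 4 := fun i =>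
  if k < i then 3 else if i ∈ A ∨ (i = k ∧ Odd #A) then 2 else 1

lemma ladderBasis_ne_zero {m : ℕ} (k : Fin m) (A : Finset (Fin m)) (i : Fin m) :
    ladderBasis k A i ≠ 0 := by
  unfold ladderBasis
  split_ifs <;> decide

lemma ladderBasis_eq_three_iff {m : ℕ} {k i : Fin m} (A : Finset (Fin m)) :
    ladderBasis k A i = 3 ↔ k < i := by
  unfold ladderBasis
  split_ifs <;> simp_all

lemma mem_iff_ladderBasis_eq_two {m : ℕ} {k i : Fin m} {A : Finset (Fin m)} (hA : A ⊆ Iio k) :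
    i ∈ A ↔ i < k ∧ ladderBasis k A i = 2 := by
  unfold ladderBasis
  have := @hA i
  rw [mem_Iio] at this
  split_ifs <;> grind

lemma eq_and_eq_of_ladderBasis_eq {m : ℕ} {k k' : Fin m} {A A' : Finset (Fin m)}
    (hA : A ⊆ Iio k) (hA' : A' ⊆ Iio k') (h : ladderBasis k A = ladderBasis k' A') :
    k = k' ∧ A = A' := by
  have hZ : ∀ i, k < i ↔ k' < i := fun i => by
    rw [← ladderBasis_eq_three_iff A, ← ladderBasis_eq_three_iff A', h]
  have hk : k = k' := le_antisymm (not_lt.mp fun hlt => lt_irrefl k ((hZ k).mpr hlt))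
    (not_lt.mp fun hlt => lt_irrefl k' ((hZ k').mp hlt))
  subst hk
  refine ⟨rfl, ext fun i => ?_⟩
  rw [mem_iff_ladderBasis_eq_two hA, mem_iff_ladderBasis_eq_two hA', h]

theorem ladderBasis_covers {m : ℕ} {s : Fin m → Fin 4} {k : Fin m}
    (hflip : ∀ i, (s i = 1 ∨ s i = 2) ↔ i ≤ k) (heven : Even #{i | s i = 2}) :
    Covers (ladderBasis k (Finset.erase {i | s i = 2} k)) s := by
  have hpar : Odd #(Finset.erase {i | s i = 2} k) ↔ s k = 2 := by
    by_cases hk2 : s k = 2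
    · have hmem : k ∈ ({i | s i = 2} : Finset (Fin m)) := mem_filter.mpr ⟨mem_univ k, hk2⟩
      rw [card_erase_of_mem hmem]
      exact iff_of_true (Nat.Even.sub_odd (card_pos.mpr ⟨k, hmem⟩) heven odd_one) hk2
    · rw [erase_eq_of_notMem (by simpa using hk2)]
      exact iff_of_false (Nat.not_odd_iff_even.mpr heven) hk2
  intro i hi0
  have hflip_i := hflip i
  unfold ladderBasis
  rcases lt_trichotomy k i with hki | rfl | hik
  · have := hflip_i.not.mpr (not_le.mpr hki)
    rw [if_pos hki]
    omega
  · simp only [lt_irrefl, if_false, mem_erase, ne_eq, not_true_eq_false, false_and, true_and,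
      false_or, hpar]
    have := hflip_i.mpr le_rfl
    split_ifs <;> omega
  · simp only [not_lt.mpr hik.le, if_false, mem_erase, hik.ne, mem_filter,
      mem_univ, true_and, false_and, or_false]
    have := hflip_i.mpr hik.le
    split_ifs <;> omega

def ladderBases (m : ℕ) : Finset (Fin m → Fin 4) :=
  (univ.sigma fun k : Fin m => (Iio k).powerset).image fun p => ladderBasis p.1 p.2

lemma card_ladderBases (m : ℕ) : #(ladderBases m) = 2 ^ m - 1 := by
  rw [ladderBases, card_image_of_injOn, card_sigma]
  · simp only [card_powerset, Fin.card_Iio]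
    rw [Fin.sum_univ_eq_sum_range (fun k => 2 ^ k), Nat.geomSum_eq le_rfl, Nat.div_one]
  · rintro ⟨k, A⟩ hA ⟨k', A'⟩ hA' h
    simp only [coe_sigma, Set.mem_sigma_iff, coe_univ, Set.mem_univ, true_and, mem_coe,
      mem_powerset] at hA hA'
    obtain ⟨rfl, rfl⟩ := eq_and_eq_of_ladderBasis_eq hA hA' h
    rfl

lemma ladderBasis_mem_ladderBases {m : ℕ} {k : Fin m} {A : Finset (Fin m)} (hA : A ⊆ Iio k) :
    ladderBasis k A ∈ ladderBases m :=
  mem_image.mpr ⟨⟨k, A⟩, mem_sigma.mpr ⟨mem_univ k, mem_powerset.mpr hA⟩, rfl⟩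

lemma ne_zero_of_mem_ladderBases {m : ℕ} {b : Fin m → Fin 4} (hb : b ∈ ladderBases m)
    (i : Fin m) : b i ≠ 0 := by
  obtain ⟨p, -, rfl⟩ := mem_image.mp hb
  exact ladderBasis_ne_zero p.1 p.2 i

theorem x_measurable_in_d_minus_one_bases_general (m : ℕ) :
    ∃ T : Finset (Fin m → Fin 4),
      T.card = 2 ^ m - 1 ∧
      (∀ b ∈ T, ∀ i, b i ≠ 0) ∧
      (∀ s : Fin m → Fin 4,
        Matrix.trace (pauliString s * xEnc m) ≠ 0 → ∃ b ∈ T, Covers b s) := by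
  refine ⟨ladderBases m, card_ladderBases m, fun b hb => ne_zero_of_mem_ladderBases hb,
    fun s hs => ?_⟩
  obtain ⟨k, hk⟩ := exists_offDiag_iff_le_of_trace_ne_zero hs
  have heven : Even #{i | s i = 2} := Nat.not_odd_iff_even.mp fun hodd =>
    hs (trace_pauliString_mul_eq_zero_of_odd (xEnc_transpose m) hodd)
  have hA : Finset.erase {i | s i = 2} k ⊆ Iio k := fun i hi => by
    obtain ⟨hik, hi2⟩ := mem_erase.mp hi
    exact mem_Iio.mpr (lt_of_le_of_ne ((hk i).mp (Or.inr (mem_filter.mp hi2).2)) hik)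
  exact ⟨_, ladderBasis_mem_ladderBases hA, ladderBasis_covers hk heven⟩

/-- the Pauli strings appearing (with non-zero coefficient) in the binary
encoding of the single-oscillator position operator `x` for `d = 2^m` levels can be
measured in `d − 1 = 2^m − 1` measurement bases. -/
theorem x_measurable_in_d_minus_one_bases (m : ℕ) (hm : 1 ≤ m) :
    ∃ T : Finset (Fin m → Fin 4),
      T.card = 2 ^ m - 1 ∧
      (∀ b ∈ T, ∀ i, b i ≠ 0) ∧
      (∀ s : Fin m → Fin 4,
        Matrix.trace (pauliString s * xEnc m) ≠ 0 → ∃ b ∈ T, Covers b s) :=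
  x_measurable_in_d_minus_one_bases_general m
end
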